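/- arXiv:2512.01796 — 7 statements merged into one kernel-verified Lean document; each statement's English description precedes it below -/
import Mathlib

section
/- If 0 ≤ x₁ < x₂ ≤ 1, then the wage function b ↦ w(b; x₁, x₂) is antitone (non-increasing) on [0, (x₁ + x₂)/2] and monotone (non-decreasing) on [(x₁ + x₂)/2, 1]; in particular the wage is minimized at the midpoint (x₁ + x₂)/2, so more extreme benefactors pay weakly more. -/
open MeasureTheory Set

/-- The wage the benefactor at `b` pays: the upper envelope of the two
politicians' policy-production costs. -/
noncomputable def w (c : ℝ → ℝ) (x₁ x₂ b : ℝ) : ℝ :=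
  max (c |x₁ - b|) (c |x₂ - b|)

/-- Politician `i`'s expected utility when she locates at `xi` and the
opponent at `xj`, benefactors being uniform on `[0,1]`. -/
noncomputable def U (c : ℝ → ℝ) (xi xj : ℝ) : ℝ :=
  ∫ b in (0:ℝ)..1, (w c xi xj b - c |xi - b|)

theorem wage_V_shaped (c : ℝ → ℝ)
    (hc : ContinuousOn c (Icc 0 1)) (hmono : StrictMonoOn c (Icc 0 1))
    (x₁ x₂ : ℝ) (h0 : 0 ≤ x₁) (h12 : x₁ < x₂) (h1 : x₂ ≤ 1) :
    AntitoneOn (fun b => w c x₁ x₂ b) (Icc 0 ((x₁ + x₂) / 2)) ∧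
    MonotoneOn (fun b => w c x₁ x₂ b) (Icc ((x₁ + x₂) / 2) 1) ∧
    ∀ b ∈ Icc (0:ℝ) 1, w c x₁ x₂ ((x₁ + x₂) / 2) ≤ w c x₁ x₂ b := by
  set m := (x₁ + x₂) / 2 with hm
  have hm0 : 0 ≤ m := by simp only [hm]; linarith
  have hm2 : m ≤ x₂ := by simp only [hm]; linarith
  have hm1 : m ≤ 1 := le_trans hm2 h1
  have hmem : ∀ b ∈ Icc (0:ℝ) 1, |x₁ - b| ∈ Icc (0:ℝ) 1 := by
    intro b hb
    constructor
    · exact abs_nonneg _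
    · rw [abs_le]; constructor <;> [linarith [hb.2, h0]; linarith [hb.1, h12.le, h1]]
  have hmono' := hmono.monotoneOn
  -- On [0,m], w = c (x₂ - b)
  have hleft : ∀ b ∈ Icc (0:ℝ) m, w c x₁ x₂ b = c (x₂ - b) := by
    intro b hb
    have hb1 : b ≤ 1 := le_trans hb.2 hm1
    have h2 : |x₂ - b| = x₂ - b := abs_of_nonneg (by linarith [hb.2])
    have hx2mem : x₂ - b ∈ Icc (0:ℝ) 1 := ⟨by linarith [hb.2], by linarith [hb.1]⟩
    have h1' : |x₁ - b| ≤ x₂ - b := by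
      rw [abs_le]
      constructor <;> [linarith [hb.2, hm]; linarith]
    have := hmono' (hmem b ⟨hb.1, hb1⟩) hx2mem h1'
    unfold w
    rw [h2, max_eq_right this]
  -- On [m,1], w = c (b - x₁)
  have hright : ∀ b ∈ Icc m 1, w c x₁ x₂ b = c (b - x₁) := by
    intro b hb
    have hb0 : 0 ≤ b := le_trans hm0 hb.1
    have hbx1 : x₁ ≤ b := by linarith [hb.1, hm]
    have h2 : |x₁ - b| = b - x₁ := by rw [abs_sub_comm]; exact abs_of_nonneg (by linarith)
    have hx1mem : b - x₁ ∈ Icc (0:ℝ) 1 := ⟨by linarith, by linarith [hb.2]⟩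
    have h1' : |x₂ - b| ≤ b - x₁ := by
      rw [abs_le]
      constructor <;> [linarith; linarith [hb.1, hm]]
    have hmem2 : |x₂ - b| ∈ Icc (0:ℝ) 1 := by
      constructor
      · exact abs_nonneg _
      · rw [abs_le]; constructor <;> [linarith [hb.2]; linarith [hb0, h1]]
    have := hmono' hmem2 hx1mem h1'
    unfold w
    rw [h2, max_eq_left this]
  have hA : AntitoneOn (fun b => w c x₁ x₂ b) (Icc 0 m) := by
    intro a ha b hb hab
    simp only
    rw [hleft a ha, hleft b hb]
    apply hmono' ⟨by linarith [hb.2], by linarith [hb.1]⟩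
      ⟨by linarith [ha.2], by linarith [ha.1]⟩ (by linarith)
  have hM : MonotoneOn (fun b => w c x₁ x₂ b) (Icc m 1) := by
    intro a ha b hb hab
    simp only
    rw [hright a ha, hright b hb]
    have hax1 : x₁ ≤ a := by linarith [ha.1, hm]
    apply hmono' ⟨by linarith, by linarith [ha.2]⟩
      ⟨by linarith, by linarith [hb.2]⟩ (by linarith)
  refine ⟨hA, hM, ?_⟩
  intro b hb
  rcases le_or_gt b m with h | h
  · exact hA ⟨hb.1, h⟩ ⟨hm0, le_refl m⟩ h
  · exact hM ⟨le_refl m, hm1⟩ ⟨h.le, hb.2⟩ h.le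
end

section
/- For x_i ≤ x_j in [0,1], the expected utility admits the change-of-variables decomposition U_i(x_i, x_j) = ∫₀^{(x_i+x_j)/2} c(x_j − b) db − ∫₀^{x_i} c(t) dt − ∫₀^{(x_j−x_i)/2} c(t) dt. -/
open MeasureTheory Set

theorem change_of_variables_decomposition (c : ℝ → ℝ)
    (hc : ContinuousOn c (Icc 0 1)) (hmono : StrictMonoOn c (Icc 0 1))
    (xi xj : ℝ) (hxi : xi ∈ Icc (0:ℝ) 1) (hxj : xj ∈ Icc (0:ℝ) 1)
    (hij : xi ≤ xj) :
    U c xi xj = (∫ b in (0:ℝ)..((xi + xj) / 2), c (xj - b))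
      - (∫ t in (0:ℝ)..xi, c t) - ∫ t in (0:ℝ)..((xj - xi) / 2), c t := by
  obtain ⟨h0i, hi1⟩ := hxi
  obtain ⟨h0j, hj1⟩ := hxj
  set m := (xi + xj) / 2 with hm
  have him : xi ≤ m := by rw [hm]; linarith
  have hmj : m ≤ xj := by rw [hm]; linarith
  have h0m : (0:ℝ) ≤ m := le_trans h0i him
  have hm1 : m ≤ 1 := le_trans hmj hj1
  have hmono' := hmono.monotoneOn
  have habs : ∀ d, d ∈ Icc (0:ℝ) 1 → ∀ b ∈ Icc (0:ℝ) 1, |d - b| ∈ Icc (0:ℝ) 1 := by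
    intro d hd b hb
    refine ⟨abs_nonneg _, ?_⟩
    rw [abs_le]
    constructor <;> [linarith [hd.1, hd.2, hb.1, hb.2]; linarith [hd.1, hd.2, hb.1, hb.2]]
  have hcont : ∀ d, d ∈ Icc (0:ℝ) 1 → ContinuousOn (fun b => c |d - b|) (Icc 0 1) := by
    intro d hd
    exact hc.comp ((continuous_const.sub continuous_id).abs.continuousOn)
      (fun b hb => habs d hd b hb)
  have hci : ContinuousOn (fun b => c |xi - b|) (Icc 0 1) := hcont xi ⟨h0i, hi1⟩
  have hcj : ContinuousOn (fun b => c |xj - b|) (Icc 0 1) := hcont xj ⟨h0j, hj1⟩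
  have hcw : ContinuousOn (fun b => w c xi xj b - c |xi - b|) (Icc 0 1) :=
    (fun x hx => ((hci x hx).max (hcj x hx)).sub (hci x hx))
  have hint : ∀ a b : ℝ, a ∈ Icc (0:ℝ) 1 → b ∈ Icc (0:ℝ) 1 →
      IntervalIntegrable (fun t => w c xi xj t - c |xi - t|) volume a b := by
    intro a b ha hb
    exact (hcw.mono (uIcc_subset_Icc ha hb)).intervalIntegrable
  have hinti : ∀ a b : ℝ, a ∈ Icc (0:ℝ) 1 → b ∈ Icc (0:ℝ) 1 →
      IntervalIntegrable (fun t => c |xi - t|) volume a b := by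
    intro a b ha hb
    exact (hci.mono (uIcc_subset_Icc ha hb)).intervalIntegrable
  have hintj : IntervalIntegrable (fun t => c (xj - t)) volume 0 m := by
    apply ContinuousOn.intervalIntegrable
    apply (hc.comp ((continuous_const.sub continuous_id).continuousOn))
    intro b hb
    rw [uIcc_of_le h0m] at hb
    exact ⟨by simp; linarith [hb.2], by simp; linarith [hb.1]⟩
  -- step 1: the integral over [m,1] vanishes
  have hzero : (∫ b in m..1, (w c xi xj b - c |xi - b|)) = 0 := by
    rw [intervalIntegral.integral_congr (g := fun _ => (0:ℝ)), intervalIntegral.integral_const]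
    · simp
    · intro b hb
      rw [uIcc_of_le hm1] at hb
      have hb01 : b ∈ Icc (0:ℝ) 1 := ⟨le_trans h0m hb.1, hb.2⟩
      have hle : |xj - b| ≤ |xi - b| := by
        have h1 : |xi - b| = b - xi := by rw [abs_sub_comm, abs_of_nonneg]; linarith [hb.1]
        rw [h1, abs_le]
        constructor <;> [linarith [hb.1]; linarith [hb.1]]
      have : c |xj - b| ≤ c |xi - b| :=
        hmono' (habs xj ⟨h0j, hj1⟩ b hb01) (habs xi ⟨h0i, hi1⟩ b hb01) hle
      simp [w, max_eq_left this]
  have hsplit : (∫ b in (0:ℝ)..1, (w c xi xj b - c |xi - b|))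
      = ∫ b in (0:ℝ)..m, (w c xi xj b - c |xi - b|) := by
    rw [← intervalIntegral.integral_add_adjacent_intervals
      (hint 0 m ⟨le_refl 0, zero_le_one⟩ ⟨h0m, hm1⟩)
      (hint m 1 ⟨h0m, hm1⟩ ⟨zero_le_one, le_refl 1⟩), hzero, add_zero]
  -- step 2: on [0,m] the wage is c (xj - b)
  have hcongr : (∫ b in (0:ℝ)..m, (w c xi xj b - c |xi - b|))
      = ∫ b in (0:ℝ)..m, (c (xj - b) - c |xi - b|) := by
    apply intervalIntegral.integral_congr
    intro b hb
    rw [uIcc_of_le h0m] at hb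
    have hb01 : b ∈ Icc (0:ℝ) 1 := ⟨hb.1, le_trans hb.2 hm1⟩
    have hxjb : |xj - b| = xj - b := abs_of_nonneg (by linarith [hb.2])
    have hle : |xi - b| ≤ |xj - b| := by
      rw [hxjb, abs_le]
      constructor <;> [linarith [hb.2]; linarith [hb.2]]
    have : c |xi - b| ≤ c |xj - b| :=
      hmono' (habs xi ⟨h0i, hi1⟩ b hb01) (habs xj ⟨h0j, hj1⟩ b hb01) hle
    rw [hxjb] at this
    simp [w, hxjb, max_eq_right this]
  -- step 3: split ∫₀^m c|xi - b|
  have hintia : IntervalIntegrable (fun t => c |xi - t|) volume 0 m :=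
    hinti 0 m ⟨le_refl 0, zero_le_one⟩ ⟨h0m, hm1⟩
  have hsub : (∫ b in (0:ℝ)..m, (c (xj - b) - c |xi - b|))
      = (∫ b in (0:ℝ)..m, c (xj - b)) - ∫ b in (0:ℝ)..m, c |xi - b| :=
    intervalIntegral.integral_sub hintj hintia
  have hiA : (∫ b in (0:ℝ)..xi, c |xi - b|) = ∫ t in (0:ℝ)..xi, c t := by
    rw [intervalIntegral.integral_congr (g := fun b => c (xi - b))]
    · rw [intervalIntegral.integral_comp_sub_left c xi]
      simp
    · intro b hb
      rw [uIcc_of_le h0i] at hb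
      simp only
      rw [abs_of_nonneg (by linarith [hb.2])]
  have hiB : (∫ b in xi..m, c |xi - b|) = ∫ t in (0:ℝ)..((xj - xi) / 2), c t := by
    rw [intervalIntegral.integral_congr (g := fun b => c (b - xi))]
    · rw [intervalIntegral.integral_comp_sub_right c xi]
      have : m - xi = (xj - xi) / 2 := by rw [hm]; ring
      simp [this]
    · intro b hb
      rw [uIcc_of_le him] at hb
      simp only
      rw [abs_sub_comm, abs_of_nonneg (by linarith [hb.1])]
  have hisplit : (∫ b in (0:ℝ)..m, c |xi - b|)
      = (∫ t in (0:ℝ)..xi, c t) + ∫ t in (0:ℝ)..((xj - xi) / 2), c t := by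
    rw [← intervalIntegral.integral_add_adjacent_intervals
      (hinti 0 xi ⟨le_refl 0, zero_le_one⟩ ⟨h0i, hi1⟩)
      (hinti xi m ⟨h0i, hi1⟩ ⟨h0m, hm1⟩), hiA, hiB]
  rw [U, hsplit, hcongr, hsub, hisplit]
  ring
end

section
/- Fix x_j ∈ (0,1]. On the open interval 0 < x_i < x_j, the function x_i ↦ U_i(x_i, x_j) is differentiable with derivative ∂U_i/∂x_i = c((x_j − x_i)/2) − c(x_i). -/
/-!
For `0 ≤ x ≤ xⱼ`, a benefactor at `b` pays the cost of the farther platform, so the integrand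
of `U` is `c (xⱼ - b) - c |x - b|` left of the midpoint `m = (x + xⱼ) / 2` and vanishes right
of it. With `C t = ∫₀ᵗ c` this gives `U c x xⱼ = C xⱼ - 2 C ((xⱼ - x) / 2) - C x`, whose derivative
in `x` is `c ((xⱼ - x) / 2) - c x` by the fundamental theorem of calculus. Clamping `c` to a
continuous monotone function on all of `ℝ` does not change `U` on `[0,1]²` and removes the
domain bookkeeping.
-/

open MeasureTheory Set

theorem ContinuousOn.exists_continuous_monotone_extension {c : ℝ → ℝ} {a b : ℝ} (hab : a ≤ b)
    (hc : ContinuousOn c (Icc a b)) (hmono : MonotoneOn c (Icc a b)) :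
    ∃ f : ℝ → ℝ, Continuous f ∧ Monotone f ∧ EqOn f c (Icc a b) :=
  ⟨IccExtend hab ((Icc a b).domRestrict c), continuous_IccExtend_iff.2 hc.domRestrict,
    (monotoneOn_iff_monotone.1 hmono).IccExtend hab,
    fun _ hx => IccExtend_of_mem hab ((Icc a b).domRestrict c) hx⟩

theorem U_congr {c f : ℝ → ℝ} (h : EqOn c f (Icc 0 1)) {x xj : ℝ} (hx : x ∈ Icc (0:ℝ) 1)
    (hxj : xj ∈ Icc (0:ℝ) 1) : U c x xj = U f x xj := by
  have abs_sub_mem {y b : ℝ} (hy : y ∈ Icc (0:ℝ) 1) (hb : b ∈ Icc (0:ℝ) 1) :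
      |y - b| ∈ Icc (0:ℝ) 1 :=
    ⟨abs_nonneg _, abs_sub_le_iff.2 ⟨by linarith [hy.2, hb.1], by linarith [hy.1, hb.2]⟩⟩
  refine intervalIntegral.integral_congr fun b hb => ?_
  rw [uIcc_of_le zero_le_one] at hb
  simp only [w, h (abs_sub_mem hx hb), h (abs_sub_mem hxj hb)]

section

variable {f : ℝ → ℝ} {x xj b : ℝ}

noncomputable def closedFormU (f : ℝ → ℝ) (x xj : ℝ) : ℝ :=
  (∫ s in (0:ℝ)..xj, f s) - 2 * (∫ s in (0:ℝ)..(xj - x) / 2, f s) - ∫ s in (0:ℝ)..x, f s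

theorem w_eq_of_le_midpoint (hf : Monotone f) (hxxj : x ≤ xj) (hb : b ≤ (x + xj) / 2) :
    w f x xj b = f (xj - b) := by
  have hxj : |xj - b| = xj - b := abs_of_nonneg (by linarith)
  have hle : |x - b| ≤ |xj - b| := by
    rw [hxj]
    exact abs_sub_le_iff.2 ⟨by linarith, by linarith⟩
  rw [w, max_eq_right (hf hle), hxj]

theorem w_eq_of_midpoint_le (hf : Monotone f) (hxxj : x ≤ xj) (hb : (x + xj) / 2 ≤ b) :
    w f x xj b = f |x - b| := by
  have hle : |xj - b| ≤ |x - b| :=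
    abs_sub_le_iff.2 ⟨by linarith [neg_le_abs (x - b)], by linarith [neg_le_abs (x - b)]⟩
  rw [w, max_eq_left (hf hle)]

theorem integral_comp_abs_sub (hf : Continuous f) (hx : 0 ≤ x) {m : ℝ} (hxm : x ≤ m) :
    ∫ b in (0:ℝ)..m, f |x - b| = (∫ s in (0:ℝ)..x, f s) + ∫ s in (0:ℝ)..(m - x), f s := by
  have hint : ∀ a a' : ℝ, IntervalIntegrable (fun b => f |x - b|) volume a a' := fun _ _ =>
    (by fun_prop : Continuous fun b => f |x - b|).intervalIntegrable _ _
  rw [← intervalIntegral.integral_add_adjacent_intervals (hint 0 x) (hint x m)]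
  congr 1
  · calc ∫ b in (0:ℝ)..x, f |x - b| = ∫ b in (0:ℝ)..x, f (x - b) :=
          intervalIntegral.integral_congr fun b hb => by
            rw [uIcc_of_le hx] at hb
            simp only [abs_of_nonneg (sub_nonneg.2 hb.2)]
      _ = ∫ s in (0:ℝ)..x, f s := by
          rw [intervalIntegral.integral_comp_sub_left, sub_self, sub_zero]
  · calc ∫ b in x..m, f |x - b| = ∫ b in x..m, f (b - x) :=
          intervalIntegral.integral_congr fun b hb => by
            rw [uIcc_of_le hxm] at hb
            simp only [abs_sub_comm x b, abs_of_nonneg (sub_nonneg.2 hb.1)]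
      _ = ∫ s in (0:ℝ)..(m - x), f s := by
          rw [intervalIntegral.integral_comp_sub_right, sub_self]

theorem U_eq_closedFormU (hf : Continuous f) (hmono : Monotone f) (hx : 0 ≤ x) (hxxj : x ≤ xj)
    (hxj : xj ≤ 1) : U f x xj = closedFormU f x xj := by
  set m := (x + xj) / 2 with hm
  have hg : Continuous fun b => w f x xj b - f |x - b| := by unfold w; fun_prop
  have hright : ∫ b in m..1, (w f x xj b - f |x - b|) = 0 := by
    rw [← intervalIntegral.integral_zero (a := m) (b := 1) (μ := volume)]
    refine intervalIntegral.integral_congr fun b hb => ?_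
    rw [uIcc_of_le (by linarith)] at hb
    simp only [w_eq_of_midpoint_le hmono hxxj hb.1, sub_self]
  have hleft : ∫ b in (0:ℝ)..m, (w f x xj b - f |x - b|)
      = (∫ b in (0:ℝ)..m, f (xj - b)) - ∫ b in (0:ℝ)..m, f |x - b| := by
    rw [← intervalIntegral.integral_sub
      ((by fun_prop : Continuous fun b => f (xj - b)).intervalIntegrable 0 m)
      ((by fun_prop : Continuous fun b => f |x - b|).intervalIntegrable 0 m)]
    refine intervalIntegral.integral_congr fun b hb => ?_
    rw [uIcc_of_le (by linarith)] at hb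
    simp only [w_eq_of_le_midpoint hmono hxxj hb.2]
  have hreflect : ∫ b in (0:ℝ)..m, f (xj - b)
      = (∫ s in (0:ℝ)..xj, f s) - ∫ s in (0:ℝ)..(xj - x) / 2, f s := by
    rw [intervalIntegral.integral_comp_sub_left, sub_zero,
      intervalIntegral.integral_interval_sub_left (hf.intervalIntegrable _ _)
        (hf.intervalIntegrable _ _)]
    congr 1
    ring
  rw [U, ← intervalIntegral.integral_add_adjacent_intervals (hg.intervalIntegrable 0 m)
    (hg.intervalIntegrable m 1), hright, hleft, hreflect,
    integral_comp_abs_sub hf hx (by linarith : x ≤ m), show m - x = (xj - x) / 2 by ring,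
    closedFormU]
  ring

theorem hasDerivAt_closedFormU (hf : Continuous f) (xj x : ℝ) :
    HasDerivAt (fun y => closedFormU f y xj) (f ((xj - x) / 2) - f x) x := by
  have hF (t : ℝ) : HasDerivAt (fun u => ∫ s in (0:ℝ)..u, f s) (f t) t :=
    (hf.integral_hasStrictDerivAt 0 t).hasDerivAt
  have hhalf : HasDerivAt (fun y : ℝ => (xj - y) / 2) (-1 / 2) x := by
    simpa using ((hasDerivAt_id x).const_sub xj).div_const 2
  exact (((hasDerivAt_const x _).sub (((hF _).comp x hhalf).const_mul 2)).sub (hF x)).congr_deriv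
    (by ring)

theorem hasDerivAt_U_of_continuous_of_monotone (hf : Continuous f) (hmono : Monotone f)
    (hxj : xj ≤ 1) (hx : x ∈ Ioo 0 xj) :
    HasDerivAt (fun y => U f y xj) (f ((xj - x) / 2) - f x) x := by
  refine (hasDerivAt_closedFormU hf xj x).congr_of_eventuallyEq ?_
  filter_upwards [Ioo_mem_nhds hx.1 hx.2] with y hy
  exact U_eq_closedFormU hf hmono hy.1.le hy.2.le hxj

end

theorem deriv_left_region (c : ℝ → ℝ)
    (hc : ContinuousOn c (Icc 0 1)) (hmono : StrictMonoOn c (Icc 0 1))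
    (xj : ℝ) (hxj : xj ∈ Ioc (0:ℝ) 1) :
    ∀ xi ∈ Ioo (0:ℝ) xj,
      HasDerivAt (fun x => U c x xj) (c ((xj - xi) / 2) - c xi) xi := by
  intro xi hxi
  obtain ⟨f, hf, hfmono, hfc⟩ :=
    hc.exists_continuous_monotone_extension zero_le_one hmono.monotoneOn
  have hxi1 : xi < 1 := hxi.2.trans_le hxj.2
  have hhalf : (xj - xi) / 2 ∈ Icc (0:ℝ) 1 := ⟨by linarith [hxi.2], by linarith [hxi.1, hxj.2]⟩
  rw [← hfc hhalf, ← hfc ⟨hxi.1.le, hxi1.le⟩]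
  refine (hasDerivAt_U_of_continuous_of_monotone hf hfmono hxj.2 hxi).congr_of_eventuallyEq ?_
  filter_upwards [Ioo_mem_nhds hxi.1 hxi1] with x hx
  exact U_congr hfc.symm (Ioo_subset_Icc_self hx) (Ioc_subset_Icc_self hxj)
end

section
/- Fix x_j ∈ [0,1). On the open interval x_j < x_i < 1, the function x_i ↦ U_i(x_i, x_j) is differentiable with derivative ∂U_i/∂x_i = c(1 − x_i) − c((x_i − x_j)/2). -/
open MeasureTheory Set

/-! For `xj ≤ x`, benefactors left of the midpoint `(x + xj) / 2` are nearer to `xj`, so they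
pay `c |x - b|` and contribute nothing to `U c x xj`; those right of it pay `c (b - xj)`.
Hence `U c x xj = C (1 - xj) - 2 C ((x - xj) / 2) - C (1 - x)` with `C u = ∫₀ᵘ c`, and
the fundamental theorem of calculus differentiates this closed form. -/

lemma abs_sub_mem_Icc {x b : ℝ} (hx : x ∈ Icc (0:ℝ) 1) (hb : b ∈ Icc (0:ℝ) 1) :
    |x - b| ∈ Icc (0:ℝ) 1 := by
  obtain ⟨hx0, hx1⟩ := hx
  obtain ⟨hb0, hb1⟩ := hb
  exact ⟨abs_nonneg _, abs_le.2 ⟨by linarith, by linarith⟩⟩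

lemma continuousOn_comp_abs_sub {c : ℝ → ℝ} (hc : ContinuousOn c (Icc 0 1)) {x : ℝ}
    (hx : x ∈ Icc (0:ℝ) 1) : ContinuousOn (fun b => c |x - b|) (Icc 0 1) :=
  hc.comp (continuous_const.sub continuous_id).abs.continuousOn
    fun _ hb => abs_sub_mem_Icc hx hb

lemma ContinuousOn.intervalIntegrable_of_mem_Icc {f : ℝ → ℝ} {p q a b : ℝ}
    (hf : ContinuousOn f (Icc p q)) (ha : a ∈ Icc p q) (hb : b ∈ Icc p q) :
    IntervalIntegrable f volume a b :=
  (hf.mono (uIcc_subset_Icc ha hb)).intervalIntegrable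

section Wage

variable {c : ℝ → ℝ} {x xj b : ℝ}

lemma w_eq_of_le_midpoint_s8 (hmono : MonotoneOn c (Icc 0 1)) (hxj : 0 ≤ xj) (hjx : xj ≤ x)
    (hx : x ≤ 1) (hb : 0 ≤ b) (hbm : b ≤ (x + xj) / 2) : w c x xj b = c |x - b| := by
  have hxb : |x - b| = x - b := abs_of_nonneg (by linarith)
  refine max_eq_left (hmono (abs_sub_mem_Icc ⟨hxj, by linarith⟩ ⟨hb, by linarith⟩)
    (abs_sub_mem_Icc ⟨by linarith, hx⟩ ⟨hb, by linarith⟩) ?_)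
  rw [hxb]
  exact abs_le.2 ⟨by linarith, by linarith⟩

lemma w_eq_of_midpoint_le_s8 (hmono : MonotoneOn c (Icc 0 1)) (hxj : 0 ≤ xj) (hjx : xj ≤ x)
    (hx : x ≤ 1) (hmb : (x + xj) / 2 ≤ b) (hb : b ≤ 1) : w c x xj b = c (b - xj) := by
  have hjb : |xj - b| = b - xj := by rw [abs_sub_comm]; exact abs_of_nonneg (by linarith)
  rw [w, hjb]
  exact max_eq_right (hmono (abs_sub_mem_Icc ⟨by linarith, hx⟩ ⟨by linarith, hb⟩)
    ⟨by linarith, by linarith⟩ (abs_le.2 ⟨by linarith, by linarith⟩))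

end Wage

lemma integral_comp_abs_sub_s8 {c : ℝ → ℝ} (hc : ContinuousOn c (Icc 0 1)) {m x : ℝ}
    (hm : 0 ≤ m) (hmx : m ≤ x) (hx : x ≤ 1) :
    ∫ b in m..1, c |x - b| = (∫ t in (0:ℝ)..(x - m), c t) + ∫ t in (0:ℝ)..(1 - x), c t := by
  have hcx := continuousOn_comp_abs_sub hc ⟨hm.trans hmx, hx⟩
  have hleft : ∫ b in m..x, c |x - b| = ∫ t in (0:ℝ)..(x - m), c t := by
    rw [intervalIntegral.integral_congr (g := fun b => c (x - b)) fun b hb => ?_,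
      intervalIntegral.integral_comp_sub_left c x, sub_self]
    rw [uIcc_of_le hmx] at hb
    simp only [abs_of_nonneg (sub_nonneg.2 hb.2)]
  have hright : ∫ b in x..1, c |x - b| = ∫ t in (0:ℝ)..(1 - x), c t := by
    rw [intervalIntegral.integral_congr (g := fun b => c (b - x)) fun b hb => ?_,
      intervalIntegral.integral_comp_sub_right c x, sub_self]
    rw [uIcc_of_le hx] at hb
    simp only [abs_sub_comm x b, abs_of_nonneg (sub_nonneg.2 hb.1)]
  rw [← intervalIntegral.integral_add_adjacent_intervals
    (hcx.intervalIntegrable_of_mem_Icc ⟨hm, hmx.trans hx⟩ ⟨hm.trans hmx, hx⟩)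
    (hcx.intervalIntegrable_of_mem_Icc ⟨hm.trans hmx, hx⟩ ⟨zero_le_one, le_rfl⟩),
    hleft, hright]

lemma U_eq_of_lt {c : ℝ → ℝ} (hc : ContinuousOn c (Icc 0 1)) (hmono : MonotoneOn c (Icc 0 1))
    {xj x : ℝ} (hxj : 0 ≤ xj) (hjx : xj < x) (hx : x < 1) :
    U c x xj = (∫ t in (0:ℝ)..(1 - xj), c t)
      - 2 * (∫ t in (0:ℝ)..((x - xj) / 2), c t) - ∫ t in (0:ℝ)..(1 - x), c t := by
  set m := (x + xj) / 2 with hm_def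
  have hm0 : 0 ≤ m := by linarith
  have hm1 : m ≤ 1 := by linarith
  have hmI : m ∈ Icc (0:ℝ) 1 := ⟨hm0, hm1⟩
  have hxI : x ∈ Icc (0:ℝ) 1 := ⟨by linarith, hx.le⟩
  have hcx := continuousOn_comp_abs_sub hc hxI
  have hf : ContinuousOn (fun b => w c x xj b - c |x - b|) (Icc 0 1) :=
    (hcx.sup (continuousOn_comp_abs_sub hc ⟨hxj, by linarith⟩)).sub hcx
  have hleft : ∫ b in (0:ℝ)..m, (w c x xj b - c |x - b|) = 0 := by
    rw [intervalIntegral.integral_congr (g := fun _ => (0:ℝ)) fun b hb => ?_,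
      intervalIntegral.integral_zero]
    rw [uIcc_of_le hm0] at hb
    simp only [w_eq_of_le_midpoint_s8 hmono hxj hjx.le hx.le hb.1 hb.2, sub_self]
  have hright : ∫ b in m..1, (w c x xj b - c |x - b|)
      = (∫ b in m..1, c (b - xj)) - ∫ b in m..1, c |x - b| := by
    rw [intervalIntegral.integral_congr (g := fun b => c (b - xj) - c |x - b|) fun b hb => ?_]
    · have hshift : IntervalIntegrable (fun b => c (b - xj)) volume m 1 := by
        simpa using (hc.intervalIntegrable_of_mem_Icc (a := m - xj) (b := 1 - xj)
          ⟨by linarith, by linarith⟩ ⟨by linarith, by linarith⟩).comp_sub_right xj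
      exact intervalIntegral.integral_sub hshift
        (hcx.intervalIntegrable_of_mem_Icc hmI ⟨zero_le_one, le_rfl⟩)
    · rw [uIcc_of_le hm1] at hb
      simp only [w_eq_of_midpoint_le_s8 hmono hxj hjx.le hx.le hb.1 hb.2]
  have hshift : ∫ b in m..1, c (b - xj)
      = (∫ t in (0:ℝ)..(1 - xj), c t) - ∫ t in (0:ℝ)..((x - xj) / 2), c t := by
    rw [intervalIntegral.integral_comp_sub_right c xj, show m - xj = (x - xj) / 2 by linarith,
      intervalIntegral.integral_interval_sub_left
        (hc.intervalIntegrable_of_mem_Icc ⟨le_rfl, zero_le_one⟩ ⟨by linarith, by linarith⟩)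
        (hc.intervalIntegrable_of_mem_Icc ⟨le_rfl, zero_le_one⟩ ⟨by linarith, by linarith⟩)]
  rw [U, ← intervalIntegral.integral_add_adjacent_intervals
      (hf.intervalIntegrable_of_mem_Icc ⟨le_rfl, zero_le_one⟩ hmI)
      (hf.intervalIntegrable_of_mem_Icc hmI ⟨zero_le_one, le_rfl⟩),
    hleft, hright, hshift, integral_comp_abs_sub_s8 hc hm0 (by linarith) hx.le,
    show x - m = (x - xj) / 2 by linarith]
  ring

lemma hasDerivAt_integral_of_mem_Ioo {c : ℝ → ℝ} {a b t : ℝ} (hc : ContinuousOn c (Icc a b))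
    (ht : t ∈ Ioo a b) : HasDerivAt (fun u => ∫ s in a..u, c s) (c t) t :=
  intervalIntegral.integral_hasDerivAt_right
    (hc.intervalIntegrable_of_mem_Icc (left_mem_Icc.2 (ht.1.trans ht.2).le)
      (Ioo_subset_Icc_self ht))
    ((hc.mono Ioo_subset_Icc_self).stronglyMeasurableAtFilter isOpen_Ioo t ht)
    (hc.continuousAt (Icc_mem_nhds ht.1 ht.2))

theorem deriv_right_region (c : ℝ → ℝ)
    (hc : ContinuousOn c (Icc 0 1)) (hmono : StrictMonoOn c (Icc 0 1))
    (xj : ℝ) (hxj : xj ∈ Ico (0:ℝ) 1) :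
    ∀ xi ∈ Ioo xj (1:ℝ),
      HasDerivAt (fun x => U c x xj) (c (1 - xi) - c ((xi - xj) / 2)) xi := by
  rintro xi ⟨hjx, hx⟩
  have hgap : HasDerivAt (fun x => ∫ t in (0:ℝ)..((x - xj) / 2), c t)
      (c ((xi - xj) / 2) * (1 / 2)) xi :=
    (hasDerivAt_integral_of_mem_Ioo hc ⟨by linarith, by linarith [hxj.1]⟩).comp xi
      (((hasDerivAt_id xi).sub_const xj).div_const 2)
  have hrest : HasDerivAt (fun x => ∫ t in (0:ℝ)..(1 - x), c t) (c (1 - xi) * (-1)) xi :=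
    (hasDerivAt_integral_of_mem_Ioo hc ⟨by linarith, by linarith [hxj.1]⟩).comp xi
      ((hasDerivAt_id xi).const_sub 1)
  have hclosed := ((hgap.const_mul 2).const_sub (∫ t in (0:ℝ)..(1 - xj), c t)).sub hrest
  refine (hclosed.congr_deriv (by ring)).congr_of_eventuallyEq ?_
  filter_upwards [Ioo_mem_nhds hjx hx] with x hx'
  exact U_eq_of_lt hc hmono.monotoneOn hxj.1 hx'.1 hx'.2
end

section
/- Fix x_j ∈ (0,1]. The restriction of x_i ↦ U_i(x_i, x_j) to [0, x_j] attains its maximum uniquely at x_i = x_j/3. -/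
open MeasureTheory Set

section Aux

variable {c : ℝ → ℝ}

lemma intg (hc : ContinuousOn c (Icc 0 1)) {a b : ℝ} (h0 : 0 ≤ a) (hab : a ≤ b) (hb : b ≤ 1) :
    IntervalIntegrable c MeasureTheory.volume a b :=
  (hc.mono (by rw [uIcc_of_le hab]; exact Icc_subset_Icc h0 hb)).intervalIntegrable

lemma int_le (hc : ContinuousOn c (Icc 0 1)) (hmono : StrictMonoOn c (Icc 0 1))
    {a b : ℝ} (h0 : 0 ≤ a) (hab : a ≤ b) (hb : b ≤ 1) :
    ∫ t in a..b, c t ≤ (b - a) * c b := by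
  have h := intervalIntegral.integral_mono_on hab (intg hc h0 hab hb)
    (intervalIntegrable_const (c := c b))
    (fun t ht => hmono.monotoneOn ⟨le_trans h0 ht.1, le_trans ht.2 hb⟩
      ⟨le_trans h0 hab, hb⟩ ht.2)
  simpa [smul_eq_mul] using h

lemma int_ge (hc : ContinuousOn c (Icc 0 1)) (hmono : StrictMonoOn c (Icc 0 1))
    {a b : ℝ} (h0 : 0 ≤ a) (hab : a ≤ b) (hb : b ≤ 1) :
    (b - a) * c a ≤ ∫ t in a..b, c t := by
  have h := intervalIntegral.integral_mono_on hab
    (intervalIntegrable_const (c := c a)) (intg hc h0 hab hb)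
    (fun t ht => hmono.monotoneOn ⟨h0, le_trans hab hb⟩
      ⟨le_trans h0 ht.1, le_trans ht.2 hb⟩ ht.1)
  simpa [smul_eq_mul] using h

lemma int_lt (hc : ContinuousOn c (Icc 0 1)) (hmono : StrictMonoOn c (Icc 0 1))
    {a b : ℝ} (h0 : 0 ≤ a) (hab : a < b) (hb : b ≤ 1) :
    ∫ t in a..b, c t < (b - a) * c b := by
  have hi := intg hc h0 hab.le hb
  have hpos : 0 < ∫ t in a..b, (c b - c t) := by
    apply intervalIntegral.intervalIntegral_pos_of_pos_on
    · exact (intervalIntegrable_const (c := c b)).sub hi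
    · intro t ht
      have := hmono ⟨le_trans h0 ht.1.le, le_trans ht.2.le hb⟩
        ⟨le_trans h0 hab.le, hb⟩ ht.2
      linarith
    · exact hab
  have heq : ∫ t in a..b, (c b - c t) = (b - a) * c b - ∫ t in a..b, c t := by
    rw [intervalIntegral.integral_sub (intervalIntegrable_const (c := c b)) hi]
    simp [smul_eq_mul]
  linarith [heq ▸ hpos]

lemma int_gt (hc : ContinuousOn c (Icc 0 1)) (hmono : StrictMonoOn c (Icc 0 1))
    {a b : ℝ} (h0 : 0 ≤ a) (hab : a < b) (hb : b ≤ 1) :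
    (b - a) * c a < ∫ t in a..b, c t := by
  have hi := intg hc h0 hab.le hb
  have hpos : 0 < ∫ t in a..b, (c t - c a) := by
    apply intervalIntegral.intervalIntegral_pos_of_pos_on
    · exact hi.sub (intervalIntegrable_const (c := c a))
    · intro t ht
      have := hmono ⟨h0, le_trans hab.le hb⟩
        ⟨le_trans h0 ht.1.le, le_trans ht.2.le hb⟩ ht.1
      linarith
    · exact hab
  have heq : ∫ t in a..b, (c t - c a) = (∫ t in a..b, c t) - (b - a) * c a := by
    rw [intervalIntegral.integral_sub hi (intervalIntegrable_const (c := c a))]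
    simp [smul_eq_mul]
  linarith [heq ▸ hpos]

lemma U_eq (hc : ContinuousOn c (Icc 0 1)) (hmono : StrictMonoOn c (Icc 0 1))
    {x xj : ℝ} (hx0 : 0 ≤ x) (hxxj : x ≤ xj) (hxj1 : xj ≤ 1) :
    U c x xj = (∫ t in (0:ℝ)..xj, c t) - (∫ t in (0:ℝ)..x, c t)
      - 2 * ∫ t in (0:ℝ)..((xj - x)/2), c t := by
  have hx1 : x ≤ 1 := hxxj.trans hxj1
  have hxj0 : 0 ≤ xj := hx0.trans hxxj
  set m : ℝ := (x + xj)/2 with hm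
  have hxm : x ≤ m := by rw [hm]; linarith
  have hmxj : m ≤ xj := by rw [hm]; linarith
  have hm1 : m ≤ 1 := hmxj.trans hxj1
  have hm0 : 0 ≤ m := hx0.trans hxm
  have hmem : ∀ y b : ℝ, 0 ≤ y → y ≤ 1 → 0 ≤ b → b ≤ 1 → |y - b| ∈ Icc (0:ℝ) 1 := by
    intro y b hy0 hy1 hb0 hb1
    exact ⟨abs_nonneg _, abs_le.mpr ⟨by linarith, by linarith⟩⟩
  have habs : ∀ y : ℝ, 0 ≤ y → y ≤ 1 → ContinuousOn (fun b => c |y - b|) (Icc 0 1) := by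
    intro y hy0 hy1
    apply hc.comp ((continuous_const.sub continuous_id).abs.continuousOn)
    intro b hb
    exact hmem y b hy0 hy1 hb.1 hb.2
  have hcx := habs x hx0 hx1
  have hcxj := habs xj hxj0 hxj1
  have hf : ContinuousOn (fun b => w c x xj b - c |x - b|) (Icc 0 1) := by
    unfold w
    exact (hcx.sup hcxj).sub hcx
  have hf1 : IntervalIntegrable (fun b => w c x xj b - c |x - b|) volume 0 m :=
    (hf.mono (by rw [uIcc_of_le hm0]; exact Icc_subset_Icc le_rfl hm1)).intervalIntegrable
  have hf2 : IntervalIntegrable (fun b => w c x xj b - c |x - b|) volume m 1 :=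
    (hf.mono (by rw [uIcc_of_le hm1]; exact Icc_subset_Icc hm0 le_rfl)).intervalIntegrable
  have hsplit : U c x xj = (∫ b in (0:ℝ)..m, (w c x xj b - c |x - b|))
      + ∫ b in m..(1:ℝ), (w c x xj b - c |x - b|) :=
    (intervalIntegral.integral_add_adjacent_intervals hf1 hf2).symm
  -- second piece is zero
  have hzero : ∫ b in m..(1:ℝ), (w c x xj b - c |x - b|) = 0 := by
    have he : EqOn (fun b => w c x xj b - c |x - b|) (fun _ => (0:ℝ)) (uIcc m 1) := by
      rw [uIcc_of_le hm1]
      intro b hb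
      have hb0 : 0 ≤ b := hm0.trans hb.1
      have hb1 : b ≤ 1 := hb.2
      have h1 : |xj - b| ≤ |x - b| := by
        rcases le_total b xj with h | h
        · rw [abs_of_nonneg (by linarith), abs_of_nonpos (by rw [hm] at hb; linarith [hb.1])]
          rw [hm] at hb; linarith [hb.1]
        · rw [abs_of_nonpos (by linarith), abs_of_nonpos (by linarith)]
          linarith
      have h2 : c |xj - b| ≤ c |x - b| :=
        hmono.monotoneOn (hmem xj b hxj0 hxj1 hb0 hb1) (hmem x b hx0 hx1 hb0 hb1) h1
      simp [w, max_eq_left h2]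
    rw [intervalIntegral.integral_congr he]
    simp
  -- first piece
  have hcxj' : IntervalIntegrable (fun b => c (xj - b)) volume 0 m := by
    apply ContinuousOn.intervalIntegrable
    rw [uIcc_of_le hm0]
    apply hc.comp ((continuous_const.sub continuous_id).continuousOn)
    intro b hb
    show xj - b ∈ Icc (0:ℝ) 1
    exact ⟨by linarith [hb.2, hmxj], by linarith [hb.1, hxj1]⟩
  have hcxI : IntervalIntegrable (fun b => c |x - b|) volume 0 m :=
    (hcx.mono (by rw [uIcc_of_le hm0]; exact Icc_subset_Icc le_rfl hm1)).intervalIntegrable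
  have hfirst : ∫ b in (0:ℝ)..m, (w c x xj b - c |x - b|)
      = (∫ b in (0:ℝ)..m, c (xj - b)) - ∫ b in (0:ℝ)..m, c |x - b| := by
    rw [← intervalIntegral.integral_sub hcxj' hcxI]
    apply intervalIntegral.integral_congr
    rw [uIcc_of_le hm0]
    intro b hb
    have hb0 : 0 ≤ b := hb.1
    have hbm : b ≤ m := hb.2
    have hb1 : b ≤ 1 := hbm.trans hm1
    have h1 : |x - b| ≤ |xj - b| := by
      rcases le_total b x with h | h
      · rw [abs_of_nonneg (by linarith), abs_of_nonneg (by linarith [hbm, hmxj])]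
        linarith
      · rw [abs_of_nonpos (by linarith), abs_of_nonneg (by linarith [hbm, hmxj])]
        rw [hm] at hbm; linarith
    have h2 : c |x - b| ≤ c |xj - b| :=
      hmono.monotoneOn (hmem x b hx0 hx1 hb0 hb1) (hmem xj b hxj0 hxj1 hb0 hb1) h1
    have h3 : |xj - b| = xj - b := abs_of_nonneg (by linarith [hbm, hmxj])
    rw [h3] at h2
    simp only [w, h3, max_eq_right h2]
  -- substitution for ∫₀^m c (xj - b)
  have hsub1 : ∫ b in (0:ℝ)..m, c (xj - b) = ∫ t in (xj - m)..xj, c t := by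
    rw [intervalIntegral.integral_comp_sub_left c xj, sub_zero]
  -- split ∫₀^m c|x - b| at x
  have hcxI1 : IntervalIntegrable (fun b => c |x - b|) volume 0 x :=
    (hcx.mono (by rw [uIcc_of_le hx0]; exact Icc_subset_Icc le_rfl hx1)).intervalIntegrable
  have hcxI2 : IntervalIntegrable (fun b => c |x - b|) volume x m :=
    (hcx.mono (by rw [uIcc_of_le hxm]; exact Icc_subset_Icc hx0 hm1)).intervalIntegrable
  have hsplit2 : ∫ b in (0:ℝ)..m, c |x - b|
      = (∫ b in (0:ℝ)..x, c |x - b|) + ∫ b in x..m, c |x - b| :=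
    (intervalIntegral.integral_add_adjacent_intervals hcxI1 hcxI2).symm
  have hp1 : ∫ b in (0:ℝ)..x, c |x - b| = ∫ t in (0:ℝ)..x, c t := by
    have he : EqOn (fun b => c |x - b|) (fun b => c (x - b)) (uIcc 0 x) := by
      rw [uIcc_of_le hx0]
      intro b hb
      simp only
      rw [abs_of_nonneg (by linarith [hb.2])]
    rw [intervalIntegral.integral_congr he,
      intervalIntegral.integral_comp_sub_left c x, sub_zero, sub_self]
  have hp2 : ∫ b in x..m, c |x - b| = ∫ t in (0:ℝ)..(m - x), c t := by
    have he : EqOn (fun b => c |x - b|) (fun b => c (b - x)) (uIcc x m) := by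
      rw [uIcc_of_le hxm]
      intro b hb
      simp only
      rw [abs_of_nonpos (by linarith [hb.1]), neg_sub]
    rw [intervalIntegral.integral_congr he,
      intervalIntegral.integral_comp_sub_right c x, sub_self]
  -- reassemble
  have hh0 : 0 ≤ xj - m := by linarith
  have hhm : xj - m ≤ xj := by linarith
  have hadd : (∫ t in (0:ℝ)..(xj - m), c t) + ∫ t in (xj - m)..xj, c t
      = ∫ t in (0:ℝ)..xj, c t :=
    intervalIntegral.integral_add_adjacent_intervals
      (intg hc le_rfl hh0 (le_trans hhm hxj1)) (intg hc hh0 hhm hxj1)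
  have hmx : m - x = (xj - x)/2 := by rw [hm]; ring
  have hxm' : xj - m = (xj - x)/2 := by rw [hm]; ring
  rw [hxm'] at hadd
  rw [hsplit, hzero, hfirst, hsub1, hsplit2, hp1, hp2, hmx, hxm']
  linarith [hadd]

end Aux

theorem left_region_unique_max (c : ℝ → ℝ)
    (hc : ContinuousOn c (Icc 0 1)) (hmono : StrictMonoOn c (Icc 0 1))
    (xj : ℝ) (hxj : xj ∈ Ioc (0:ℝ) 1) :
    (∀ x ∈ Icc (0:ℝ) xj, U c x xj ≤ U c (xj / 3) xj) ∧
    (∀ x ∈ Icc (0:ℝ) xj, U c x xj = U c (xj / 3) xj → x = xj / 3) := by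
  obtain ⟨hxj0, hxj1⟩ := hxj
  have h3 : xj / 3 ∈ Icc (0:ℝ) xj := ⟨by linarith, by linarith⟩
  have hU3 : U c (xj/3) xj = (∫ t in (0:ℝ)..xj, c t) - 3 * ∫ t in (0:ℝ)..(xj/3), c t := by
    have := U_eq hc hmono h3.1 h3.2 hxj1
    have h9 : (xj - xj/3)/2 = xj/3 := by ring
    rw [h9] at this
    linarith [this]
  have key : ∀ x ∈ Icc (0:ℝ) xj, x ≠ xj/3 → U c x xj < U c (xj/3) xj := by
    intro x hx hne
    have hx0 := hx.1
    have hxxj := hx.2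
    have hx1 : x ≤ 1 := hxxj.trans hxj1
    have hUx := U_eq hc hmono hx0 hxxj hxj1
    set h : ℝ := (xj - x)/2 with hh
    have hh0 : 0 ≤ h := by rw [hh]; linarith
    have hh1 : h ≤ 1 := by rw [hh]; linarith
    have h30 : (0:ℝ) ≤ xj/3 := by linarith
    have h31 : xj/3 ≤ 1 := by linarith
    rw [hUx, hU3]
    -- suffices: 3 F(xj/3) < F x + 2 F h
    rcases lt_or_gt_of_ne hne with hlt | hgt
    · -- x < xj/3, h > xj/3
      have hhgt : xj/3 < h := by rw [hh]; linarith
      have i1 : (∫ t in x..(xj/3), c t) < (xj/3 - x) * c (xj/3) :=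
        int_lt hc hmono hx0 hlt h31
      have i2 : (h - xj/3) * c (xj/3) ≤ ∫ t in (xj/3)..h, c t :=
        int_ge hc hmono h30 hhgt.le hh1
      have a1 : (∫ t in (0:ℝ)..x, c t) + ∫ t in x..(xj/3), c t
          = ∫ t in (0:ℝ)..(xj/3), c t :=
        intervalIntegral.integral_add_adjacent_intervals
          (intg hc le_rfl hx0 hx1) (intg hc hx0 hlt.le h31)
      have a2 : (∫ t in (0:ℝ)..(xj/3), c t) + ∫ t in (xj/3)..h, c t
          = ∫ t in (0:ℝ)..h, c t :=
        intervalIntegral.integral_add_adjacent_intervals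
          (intg hc le_rfl h30 h31) (intg hc h30 hhgt.le hh1)
      have hrel : (xj/3 - x) * c (xj/3) = 2 * ((h - xj/3) * c (xj/3)) := by
        rw [hh]; ring
      linarith [i1, i2, a1, a2]
    · -- x > xj/3, h < xj/3
      have hhlt : h < xj/3 := by rw [hh]; linarith
      have i1 : (x - xj/3) * c (xj/3) < ∫ t in (xj/3)..x, c t :=
        int_gt hc hmono h30 hgt hx1
      have i2 : (∫ t in h..(xj/3), c t) ≤ (xj/3 - h) * c (xj/3) :=
        int_le hc hmono hh0 hhlt.le h31
      have a1 : (∫ t in (0:ℝ)..(xj/3), c t) + ∫ t in (xj/3)..x, c t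
          = ∫ t in (0:ℝ)..x, c t :=
        intervalIntegral.integral_add_adjacent_intervals
          (intg hc le_rfl h30 h31) (intg hc h30 hgt.le hx1)
      have a2 : (∫ t in (0:ℝ)..h, c t) + ∫ t in h..(xj/3), c t
          = ∫ t in (0:ℝ)..(xj/3), c t :=
        intervalIntegral.integral_add_adjacent_intervals
          (intg hc le_rfl hh0 hh1) (intg hc hh0 hhlt.le h31)
      have hrel : (x - xj/3) * c (xj/3) = 2 * ((xj/3 - h) * c (xj/3)) := by
        rw [hh]; ring
      linarith [i1, i2, a1, a2]
  constructor
  · intro x hx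
    by_cases hne : x = xj/3
    · rw [hne]
    · exact (key x hx hne).le
  · intro x hx heq
    by_contra hne
    exact absurd heq (key x hx hne).ne
end

section
/- Fix x_j ∈ [0,1). The restriction of x_i ↦ U_i(x_i, x_j) to [x_j, 1] attains its maximum uniquely at x_i = (2 + x_j)/3. -/
open MeasureTheory Set

/-- Antiderivative of `c` starting at `0`. -/
noncomputable def F (c : ℝ → ℝ) (t : ℝ) : ℝ := ∫ s in (0:ℝ)..t, c s

section aux

variable {c : ℝ → ℝ}

lemma int_c (hc : ContinuousOn c (Icc 0 1)) {a b : ℝ}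
    (ha : a ∈ Icc (0:ℝ) 1) (hb : b ∈ Icc (0:ℝ) 1) :
    IntervalIntegrable c volume a b := by
  apply ContinuousOn.intervalIntegrable
  apply hc.mono
  intro s hs
  rw [mem_uIcc] at hs
  obtain ⟨ha1, ha2⟩ := ha; obtain ⟨hb1, hb2⟩ := hb
  constructor <;> rcases hs with ⟨h1, h2⟩ | ⟨h1, h2⟩ <;> linarith

lemma F_diff (hc : ContinuousOn c (Icc 0 1)) {a b : ℝ}
    (ha : a ∈ Icc (0:ℝ) 1) (hb : b ∈ Icc (0:ℝ) 1) :
    (∫ s in a..b, c s) = F c b - F c a := by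
  have h0 : (0:ℝ) ∈ Icc (0:ℝ) 1 := by norm_num
  have h := intervalIntegral.integral_add_adjacent_intervals
    (int_c hc h0 ha) (int_c hc ha hb)
  unfold F
  linarith

lemma F_lower (hc : ContinuousOn c (Icc 0 1)) (hmono : StrictMonoOn c (Icc 0 1))
    {a b : ℝ} (ha : 0 ≤ a) (hab : a < b) (hb : b ≤ 1) :
    (b - a) * c a < F c b - F c a := by
  have ha' : a ∈ Icc (0:ℝ) 1 := ⟨ha, by linarith⟩
  have hb' : b ∈ Icc (0:ℝ) 1 := ⟨by linarith, hb⟩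
  rw [← F_diff hc ha' hb']
  have hint : IntervalIntegrable (fun s => c s - c a) volume a b :=
    (int_c hc ha' hb').sub (intervalIntegrable_const)
  have hpos : 0 < ∫ s in a..b, (c s - c a) := by
    apply intervalIntegral.intervalIntegral_pos_of_pos_on hint _ hab
    intro s hs
    have : c a < c s := hmono ha' ⟨by linarith [hs.1], by linarith [hs.2]⟩ hs.1
    linarith
  rw [intervalIntegral.integral_sub (int_c hc ha' hb') intervalIntegrable_const,
    intervalIntegral.integral_const, smul_eq_mul] at hpos
  linarith

lemma F_upper (hc : ContinuousOn c (Icc 0 1)) (hmono : StrictMonoOn c (Icc 0 1))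
    {a b : ℝ} (ha : 0 ≤ a) (hab : a ≤ b) (hb : b ≤ 1) :
    F c b - F c a ≤ (b - a) * c b := by
  have ha' : a ∈ Icc (0:ℝ) 1 := ⟨ha, by linarith⟩
  have hb' : b ∈ Icc (0:ℝ) 1 := ⟨by linarith, hb⟩
  rw [← F_diff hc ha' hb']
  have h : (∫ s in a..b, c s) ≤ ∫ s in a..b, c b := by
    apply intervalIntegral.integral_mono_on hab (int_c hc ha' hb') intervalIntegrable_const
    intro s hs
    exact hmono.monotoneOn ⟨by linarith [hs.1], by linarith [hs.2]⟩ hb' hs.2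
  rw [intervalIntegral.integral_const, smul_eq_mul] at h
  linarith

/-- The key strict inequality: `f d = -2 F(d/2) - F(L-d)` is uniquely maximized
at `d = 2L/3` on `[0, L]`. -/
lemma key (hc : ContinuousOn c (Icc 0 1)) (hmono : StrictMonoOn c (Icc 0 1))
    {L d : ℝ} (hL : 0 < L) (hL1 : L ≤ 1) (hd0 : 0 ≤ d) (hdL : d ≤ L)
    (hne : d ≠ 2 * L / 3) :
    -2 * F c (d / 2) - F c (L - d) < -2 * F c (L / 3) - F c (L / 3) := by
  rcases lt_or_gt_of_ne hne with h | h
  · -- d < 2L/3 : compare on [d/2, L/3] and [L/3, L-d]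
    have h1 : F c (L / 3) - F c (d / 2) ≤ (L / 3 - d / 2) * c (L / 3) :=
      F_upper hc hmono (by linarith) (by linarith) (by linarith)
    have h2 : (L - d - L / 3) * c (L / 3) < F c (L - d) - F c (L / 3) :=
      F_lower hc hmono (by linarith) (by linarith) (by linarith)
    nlinarith
  · -- d > 2L/3 : compare on [L/3, d/2] and [L-d, L/3]
    have h1 : (d / 2 - L / 3) * c (L / 3) < F c (d / 2) - F c (L / 3) :=
      F_lower hc hmono (by linarith) (by linarith) (by linarith)
    have h2 : F c (L / 3) - F c (L - d) ≤ (L / 3 - (L - d)) * c (L / 3) :=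
      F_upper hc hmono (by linarith) (by linarith) (by linarith)
    nlinarith

lemma U_formula (hc : ContinuousOn c (Icc 0 1)) (hmono : StrictMonoOn c (Icc 0 1))
    {xj x : ℝ} (hxj : xj ∈ Ico (0:ℝ) 1) (hx : x ∈ Icc xj 1) :
    U c x xj = F c (1 - xj) - 2 * F c ((x - xj) / 2) - F c (1 - x) := by
  obtain ⟨hxj0, hxj1⟩ := hxj
  obtain ⟨hxl, hxu⟩ := hx
  set m : ℝ := (x + xj) / 2 with hm
  -- basic bounds
  have hx0 : 0 ≤ x := le_trans hxj0 hxl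
  have hm0 : 0 ≤ m := by positivity
  have hmx : m ≤ x := by simp only [hm]; linarith
  have habs : ∀ y ∈ Icc (0:ℝ) 1, Continuous fun b : ℝ => |y - b| := fun y _ =>
    (continuous_const.sub continuous_id).abs
  have hmaps : ∀ y ∈ Icc (0:ℝ) 1, MapsTo (fun b : ℝ => |y - b|) (Icc 0 1) (Icc 0 1) := by
    intro y hy b hb
    refine ⟨abs_nonneg _, ?_⟩
    rw [abs_le]
    constructor <;> linarith [hy.1, hy.2, hb.1, hb.2]
  have hcont : ∀ y ∈ Icc (0:ℝ) 1, ContinuousOn (fun b : ℝ => c |y - b|) (Icc 0 1) :=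
    fun y hy => hc.comp (habs y hy).continuousOn (hmaps y hy)
  have hxI : x ∈ Icc (0:ℝ) 1 := ⟨hx0, hxu⟩
  have hxjI : xj ∈ Icc (0:ℝ) 1 := ⟨hxj0, le_of_lt hxj1⟩
  have hg : ContinuousOn (fun b : ℝ => w c x xj b - c |x - b|) (Icc 0 1) := by
    unfold w
    exact ((hcont x hxI).sup (hcont xj hxjI)).sub (hcont x hxI)
  -- integrability pieces
  have hint : ∀ a b : ℝ, a ∈ Icc (0:ℝ) 1 → b ∈ Icc (0:ℝ) 1 →
      IntervalIntegrable (fun b : ℝ => w c x xj b - c |x - b|) volume a b := by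
    intro a b ha hb
    apply ContinuousOn.intervalIntegrable
    apply hg.mono
    intro s hs
    rw [mem_uIcc] at hs
    constructor <;> rcases hs with ⟨h1, h2⟩ | ⟨h1, h2⟩ <;>
      [linarith [ha.1]; linarith [hb.1]; linarith [hb.2]; linarith [ha.2]]
  have hmI : m ∈ Icc (0:ℝ) 1 := ⟨hm0, by linarith⟩
  have h0 : (0:ℝ) ∈ Icc (0:ℝ) 1 := by norm_num
  have h1 : (1:ℝ) ∈ Icc (0:ℝ) 1 := by norm_num
  -- split
  have hsplit : U c x xj = (∫ b in (0:ℝ)..m, (w c x xj b - c |x - b|)) +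
      ((∫ b in m..x, (w c x xj b - c |x - b|)) +
       (∫ b in x..(1:ℝ), (w c x xj b - c |x - b|))) := by
    rw [intervalIntegral.integral_add_adjacent_intervals (hint m x hmI hxI) (hint x 1 hxI h1),
      intervalIntegral.integral_add_adjacent_intervals (hint 0 m h0 hmI) (hint m 1 hmI h1)]
    rfl
  -- piece 1 : zero
  have hp1 : (∫ b in (0:ℝ)..m, (w c x xj b - c |x - b|)) = 0 := by
    rw [intervalIntegral.integral_congr (g := fun _ => (0:ℝ)) ?_, intervalIntegral.integral_zero]
    intro b hb
    rw [uIcc_of_le hm0] at hb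
    obtain ⟨hb0, hbm⟩ := hb
    have h1 : |x - b| = x - b := abs_of_nonneg (by simp only [hm] at hbm; linarith)
    have h2 : |xj - b| ≤ x - b := by
      rw [abs_le]; constructor <;> [simp only [hm] at hbm; skip] <;> linarith
    have h3 : c |xj - b| ≤ c |x - b| := by
      rw [h1]
      have hbm' : b ≤ (x + xj) / 2 := by simpa [hm] using hbm
      apply hmono.monotoneOn ⟨abs_nonneg _, ?_⟩ ⟨by linarith, by linarith⟩ h2
      rw [abs_le]
      constructor <;> linarith
    show max (c |x - b|) (c |xj - b|) - c |x - b| = 0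
    rw [max_eq_left h3, sub_self]
  -- piece 2
  have hp2 : (∫ b in m..x, (w c x xj b - c |x - b|)) =
      (F c (x - xj) - F c ((x - xj) / 2)) - F c ((x - xj) / 2) := by
    rw [intervalIntegral.integral_congr (g := fun b => c (b - xj) - c (x - b)) ?_]
    · rw [intervalIntegral.integral_sub]
      · rw [intervalIntegral.integral_comp_sub_right (fun s => c s) xj,
          intervalIntegral.integral_comp_sub_left (fun s => c s) x, sub_self,
          show m - xj = (x - xj) / 2 by simp only [hm]; ring,
          show x - m = (x - xj) / 2 by simp only [hm]; ring,
          F_diff hc ⟨by linarith, by linarith⟩ ⟨by linarith, by linarith⟩,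
          F_diff hc ⟨by norm_num, by norm_num⟩ ⟨by linarith, by linarith⟩]
        unfold F
        simp [intervalIntegral.integral_same]
      · apply ContinuousOn.intervalIntegrable
        apply hc.comp (continuous_id.sub continuous_const).continuousOn
        rw [uIcc_of_le hmx]
        intro s hs
        exact ⟨by simp only [id, Pi.sub_apply]; simp; linarith [hs.1], by simp only [id, Pi.sub_apply]; simp; linarith [hs.2]⟩
      · apply ContinuousOn.intervalIntegrable
        apply hc.comp (continuous_const.sub continuous_id).continuousOn
        rw [uIcc_of_le hmx]
        intro s hs
        exact ⟨by simp; linarith [hs.2], by simp; linarith [hs.1, hm0]⟩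
    · intro b hb
      rw [uIcc_of_le hmx] at hb
      obtain ⟨hbm, hbx⟩ := hb
      have hbm' : (x + xj) / 2 ≤ b := by simpa [hm] using hbm
      have h1 : |x - b| = x - b := abs_of_nonneg (by linarith)
      have h2 : |xj - b| = b - xj := by rw [abs_sub_comm, abs_of_nonneg (by linarith)]
      have h3 : c (x - b) ≤ c (b - xj) := by
        apply hmono.monotoneOn ⟨by linarith, by linarith⟩ ⟨by linarith, by linarith⟩
          (by linarith)
      simp only [w, h1, h2, max_eq_right h3]
  -- piece 3
  have hp3 : (∫ b in x..(1:ℝ), (w c x xj b - c |x - b|)) =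
      (F c (1 - xj) - F c (x - xj)) - F c (1 - x) := by
    rw [intervalIntegral.integral_congr (g := fun b => c (b - xj) - c (b - x)) ?_]
    · rw [intervalIntegral.integral_sub]
      · rw [intervalIntegral.integral_comp_sub_right (fun s => c s) xj,
          intervalIntegral.integral_comp_sub_right (fun s => c s) x, sub_self,
          F_diff hc ⟨by linarith, by linarith⟩ ⟨by linarith, by linarith⟩,
          F_diff hc ⟨by norm_num, by norm_num⟩ ⟨by linarith, by linarith⟩]
        unfold F
        simp [intervalIntegral.integral_same]
      · apply ContinuousOn.intervalIntegrable
        apply hc.comp (continuous_id.sub continuous_const).continuousOn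
        rw [uIcc_of_le hxu]
        intro s hs
        exact ⟨by simp; linarith [hs.1], by simp; linarith [hs.2]⟩
      · apply ContinuousOn.intervalIntegrable
        apply hc.comp (continuous_id.sub continuous_const).continuousOn
        rw [uIcc_of_le hxu]
        intro s hs
        exact ⟨by simp; linarith [hs.1], by simp; linarith [hs.2, hx0]⟩
    · intro b hb
      rw [uIcc_of_le hxu] at hb
      obtain ⟨hbx, hb1⟩ := hb
      have h1 : |x - b| = b - x := by rw [abs_sub_comm, abs_of_nonneg (by linarith)]
      have h2 : |xj - b| = b - xj := by rw [abs_sub_comm, abs_of_nonneg (by linarith)]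
      have h3 : c (b - x) ≤ c (b - xj) := by
        apply hmono.monotoneOn ⟨by linarith, by linarith⟩ ⟨by linarith, by linarith⟩
          (by linarith)
      simp only [w, h1, h2, max_eq_right h3]
  rw [hsplit, hp1, hp2, hp3]
  ring

end aux

theorem right_region_unique_max (c : ℝ → ℝ)
    (hc : ContinuousOn c (Icc 0 1)) (hmono : StrictMonoOn c (Icc 0 1))
    (xj : ℝ) (hxj : xj ∈ Ico (0:ℝ) 1) :
    (∀ x ∈ Icc xj (1:ℝ), U c x xj ≤ U c ((2 + xj) / 3) xj) ∧
    (∀ x ∈ Icc xj (1:ℝ), U c x xj = U c ((2 + xj) / 3) xj → x = (2 + xj) / 3) := by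
  set L : ℝ := 1 - xj with hL
  have hL0 : 0 < L := by simp only [hL]; linarith [hxj.2]
  have hL1 : L ≤ 1 := by simp only [hL]; linarith [hxj.1]
  have hxs : (2 + xj) / 3 ∈ Icc xj (1:ℝ) := ⟨by linarith [hxj.2], by linarith [hxj.1]⟩
  have hUs : U c ((2 + xj) / 3) xj = F c L - 2 * F c (L / 3) - F c (L / 3) := by
    rw [U_formula hc hmono hxj hxs,
      show ((2 + xj) / 3 - xj) / 2 = L / 3 by simp only [hL]; ring,
      show 1 - (2 + xj) / 3 = L / 3 by simp only [hL]; ring]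
  have hstrict : ∀ x ∈ Icc xj (1:ℝ), x ≠ (2 + xj) / 3 →
      U c x xj < U c ((2 + xj) / 3) xj := by
    intro x hx hne
    rw [U_formula hc hmono hxj hx, hUs,
      show 1 - x = L - (x - xj) by simp only [hL]; ring]
    have := key hc hmono hL0 hL1 (by linarith [hx.1]) (by simp only [hL]; linarith [hx.2])
      (d := x - xj) (by intro h; apply hne; simp only [hL] at h; linarith)
    linarith
  constructor
  · intro x hx
    by_cases h : x = (2 + xj) / 3
    · rw [h]
    · exact le_of_lt (hstrict x hx h)
  · intro x hx heq
    by_contra h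
    exact absurd heq (ne_of_lt (hstrict x hx h))
end

section
/- Main theorem (unique polarized equilibrium): a pair (x₁, x₂) ∈ [0,1]² is a pure-strategy equilibrium — i.e. x₁ maximizes x ↦ U₁(x, x₂) over [0,1] and x₂ maximizes x ↦ U₂(x, x₁) over [0,1] — if and only if {x₁, x₂} = {1/4, 3/4}. In particular, for any continuous strictly increasing cost c the unique equilibrium up to relabeling of politicians is (x₁*, x₂*) = (1/4, 3/4). -/
open MeasureTheory Set

noncomputable def Cv (c : ℝ → ℝ) (t : ℝ) : ℝ := ∫ s in (0:ℝ)..t, c s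

variable {c : ℝ → ℝ}

lemma mem01 : (0:ℝ) ∈ Icc (0:ℝ) 1 := ⟨le_refl 0, zero_le_one⟩

lemma cInt (hc : ContinuousOn c (Icc 0 1)) {u v : ℝ}
    (hu : u ∈ Icc (0:ℝ) 1) (hv : v ∈ Icc (0:ℝ) 1) :
    IntervalIntegrable c volume u v :=
  (hc.mono (uIcc_subset_Icc hu hv)).intervalIntegrable

lemma Cdiff (hc : ContinuousOn c (Icc 0 1)) {u v : ℝ}
    (hu : u ∈ Icc (0:ℝ) 1) (hv : v ∈ Icc (0:ℝ) 1) :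
    Cv c v - Cv c u = ∫ s in u..v, c s :=
  intervalIntegral.integral_interval_sub_left (cInt hc mem01 hv) (cInt hc mem01 hu)

lemma Cupper (hc : ContinuousOn c (Icc 0 1)) (hmono : StrictMonoOn c (Icc 0 1))
    {a b : ℝ} (h0 : 0 ≤ a) (hab : a ≤ b) (h1 : b ≤ 1) :
    Cv c b - Cv c a ≤ (b - a) * c b := by
  have ha : a ∈ Icc (0:ℝ) 1 := ⟨h0, hab.trans h1⟩
  have hb : b ∈ Icc (0:ℝ) 1 := ⟨h0.trans hab, h1⟩
  rw [Cdiff hc ha hb]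
  have h := intervalIntegral.integral_mono_on (μ := volume) hab (cInt hc ha hb)
    intervalIntegrable_const
    (fun x hx => hmono.monotoneOn ⟨h0.trans hx.1, hx.2.trans h1⟩ hb hx.2)
  simpa using h

lemma Clower (hc : ContinuousOn c (Icc 0 1)) (hmono : StrictMonoOn c (Icc 0 1))
    {a b : ℝ} (h0 : 0 ≤ a) (hab : a ≤ b) (h1 : b ≤ 1) :
    (b - a) * c a ≤ Cv c b - Cv c a := by
  have ha : a ∈ Icc (0:ℝ) 1 := ⟨h0, hab.trans h1⟩
  have hb : b ∈ Icc (0:ℝ) 1 := ⟨h0.trans hab, h1⟩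
  rw [Cdiff hc ha hb]
  have h := intervalIntegral.integral_mono_on (μ := volume) hab intervalIntegrable_const
    (cInt hc ha hb)
    (fun x hx => hmono.monotoneOn ha ⟨h0.trans hx.1, hx.2.trans h1⟩ hx.1)
  simpa using h

lemma CupperStrict (hc : ContinuousOn c (Icc 0 1)) (hmono : StrictMonoOn c (Icc 0 1))
    {a b : ℝ} (h0 : 0 ≤ a) (hab : a < b) (h1 : b ≤ 1) :
    Cv c b - Cv c a < (b - a) * c b := by
  have ha : a ∈ Icc (0:ℝ) 1 := ⟨h0, hab.le.trans h1⟩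
  have hb : b ∈ Icc (0:ℝ) 1 := ⟨h0.trans hab.le, h1⟩
  have hpos : 0 < ∫ x in a..b, (c b - c x) := by
    apply intervalIntegral.intervalIntegral_pos_of_pos_on
    · exact intervalIntegrable_const.sub (cInt hc ha hb)
    · intro x hx
      exact sub_pos.2 (hmono ⟨h0.trans hx.1.le, hx.2.le.trans h1⟩ hb hx.2)
    · exact hab
  rw [intervalIntegral.integral_sub intervalIntegrable_const (cInt hc ha hb)] at hpos
  simp only [intervalIntegral.integral_const, smul_eq_mul] at hpos
  rw [Cdiff hc ha hb]
  linarith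

lemma intAff (hc : ContinuousOn c (Icc 0 1)) {a b : ℝ} (e : ℝ → ℝ) (he : Continuous e)
    (hmaps : ∀ t ∈ uIcc a b, e t ∈ Icc (0:ℝ) 1) :
    IntervalIntegrable (fun t => c (e t)) volume a b :=
  (hc.comp he.continuousOn hmaps).intervalIntegrable

lemma U_formula_s18 (hc : ContinuousOn c (Icc 0 1)) (hmono : MonotoneOn c (Icc 0 1))
    {y z : ℝ} (h0 : 0 ≤ y) (hyz : y ≤ z) (h1 : z ≤ 1) :
    U c y z = Cv c z - Cv c y - 2 * Cv c ((z - y) / 2) := by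
  have hy1 : y ≤ 1 := hyz.trans h1
  have hz0 : 0 ≤ z := h0.trans hyz
  have hym : y ≤ (y + z) / 2 := by linarith
  have hmz : (y + z) / 2 ≤ z := by linarith
  have h0m : 0 ≤ (y + z) / 2 := by linarith
  have hm1 : (y + z) / 2 ≤ 1 := by linarith
  -- continuity of the integrand
  have cabs : ∀ x : ℝ, 0 ≤ x → x ≤ 1 → ContinuousOn (fun b => c |x - b|) (Icc 0 1) := by
    intro x hx0 hx1
    have hg : Continuous fun b : ℝ => |x - b| := by fun_prop
    apply hc.comp hg.continuousOn
    intro b hb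
    exact ⟨abs_nonneg _, abs_le.2 ⟨by linarith [hb.2], by linarith [hb.1]⟩⟩
  have contw : ContinuousOn (fun b => w c y z b - c |y - b|) (Icc 0 1) := by
    have cy := cabs y h0 hy1
    have cz := cabs z hz0 h1
    exact (fun x hx => ((cy x hx).max (cz x hx)).sub (cy x hx))
  have hfi : ∀ u v, u ∈ Icc (0:ℝ) 1 → v ∈ Icc (0:ℝ) 1 →
      IntervalIntegrable (fun b => w c y z b - c |y - b|) volume u v :=
    fun u v hu hv => (contw.mono (uIcc_subset_Icc hu hv)).intervalIntegrable
  have hsplit : U c y z = (∫ b in (0:ℝ)..y, (w c y z b - c |y - b|))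
      + (∫ b in y..((y + z) / 2), (w c y z b - c |y - b|))
      + (∫ b in ((y + z) / 2)..1, (w c y z b - c |y - b|)) := by
    unfold U
    rw [← intervalIntegral.integral_add_adjacent_intervals
        (hfi 0 ((y + z) / 2) mem01 ⟨h0m, hm1⟩)
        (hfi ((y + z) / 2) 1 ⟨h0m, hm1⟩ ⟨zero_le_one, le_refl 1⟩),
      ← intervalIntegral.integral_add_adjacent_intervals (hfi 0 y mem01 ⟨h0, hy1⟩)
        (hfi y ((y + z) / 2) ⟨h0, hy1⟩ ⟨h0m, hm1⟩)]
  have p3 : (∫ b in ((y + z) / 2)..1, (w c y z b - c |y - b|)) = 0 := by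
    have heq : EqOn (fun b => w c y z b - c |y - b|) (fun _ => (0:ℝ)) (uIcc ((y + z) / 2) 1) := by
      intro b hb
      rw [uIcc_of_le hm1] at hb
      have e1 : |y - b| = b - y := by
        rw [abs_of_nonpos (by linarith [hb.1] : y - b ≤ 0)]; ring
      have hzb : |z - b| ≤ b - y := abs_le.2 ⟨by linarith [hb.1], by linarith [hb.1]⟩
      have hle : c |z - b| ≤ c (b - y) :=
        hmono ⟨abs_nonneg _, hzb.trans (by linarith [hb.2])⟩
          ⟨by linarith [hb.1], by linarith [hb.2]⟩ hzb
      simp only [w, e1]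
      rw [max_eq_left hle, sub_self]
    rw [intervalIntegral.integral_congr heq]
    simp
  have p1 : (∫ b in (0:ℝ)..y, (w c y z b - c |y - b|))
      = (Cv c z - Cv c (z - y)) - Cv c y := by
    have heq : EqOn (fun b => w c y z b - c |y - b|)
        (fun b => c (z - b) - c (y - b)) (uIcc 0 y) := by
      intro b hb
      rw [uIcc_of_le h0] at hb
      have e1 : |y - b| = y - b := abs_of_nonneg (by linarith [hb.2])
      have e2 : |z - b| = z - b := abs_of_nonneg (by linarith [hb.2])
      have hle : c (y - b) ≤ c (z - b) :=
        hmono ⟨by linarith [hb.2], by linarith [hb.1]⟩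
          ⟨by linarith [hb.2], by linarith [hb.1]⟩ (by linarith)
      simp only [w, e1, e2]
      rw [max_eq_right hle]
    rw [intervalIntegral.integral_congr heq]
    have m1 : ∀ t ∈ uIcc (0:ℝ) y, z - t ∈ Icc (0:ℝ) 1 := by
      intro t ht; rw [uIcc_of_le h0] at ht
      exact ⟨by linarith [ht.2], by linarith [ht.1]⟩
    have m2 : ∀ t ∈ uIcc (0:ℝ) y, y - t ∈ Icc (0:ℝ) 1 := by
      intro t ht; rw [uIcc_of_le h0] at ht
      exact ⟨by linarith [ht.2], by linarith [ht.1]⟩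
    rw [intervalIntegral.integral_sub
      (intAff hc (fun t => z - t) (by fun_prop) m1)
      (intAff hc (fun t => y - t) (by fun_prop) m2)]
    congr 1
    · have h := intervalIntegral.integral_comp_sub_left (a := (0:ℝ)) (b := y) c z
      simp only [sub_zero] at h
      rw [h]
      exact (Cdiff hc ⟨by linarith, by linarith⟩ ⟨hz0, h1⟩).symm
    · have h := intervalIntegral.integral_comp_sub_left (a := (0:ℝ)) (b := y) c y
      simp only [sub_zero, sub_self] at h
      rw [h]; rfl
  have p2 : (∫ b in y..((y + z) / 2), (w c y z b - c |y - b|))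
      = (Cv c (z - y) - Cv c ((z - y) / 2)) - Cv c ((z - y) / 2) := by
    have heq : EqOn (fun b => w c y z b - c |y - b|)
        (fun b => c (z - b) - c (b - y)) (uIcc y ((y + z) / 2)) := by
      intro b hb
      rw [uIcc_of_le hym] at hb
      have e1 : |y - b| = b - y := by
        rw [abs_of_nonpos (by linarith [hb.1] : y - b ≤ 0)]; ring
      have e2 : |z - b| = z - b := abs_of_nonneg (by linarith [hb.2])
      have hle : c (b - y) ≤ c (z - b) :=
        hmono ⟨by linarith [hb.1], by linarith [hb.2]⟩
          ⟨by linarith [hb.2], by linarith [hb.1]⟩ (by linarith [hb.2])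
      simp only [w, e1, e2]
      rw [max_eq_right hle]
    rw [intervalIntegral.integral_congr heq]
    have m1 : ∀ t ∈ uIcc y ((y + z) / 2), z - t ∈ Icc (0:ℝ) 1 := by
      intro t ht; rw [uIcc_of_le hym] at ht
      exact ⟨by linarith [ht.2], by linarith [ht.1]⟩
    have m2 : ∀ t ∈ uIcc y ((y + z) / 2), t - y ∈ Icc (0:ℝ) 1 := by
      intro t ht; rw [uIcc_of_le hym] at ht
      exact ⟨by linarith [ht.1], by linarith [ht.2]⟩
    rw [intervalIntegral.integral_sub
      (intAff hc (fun t => z - t) (by fun_prop) m1)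
      (intAff hc (fun t => t - y) (by fun_prop) m2)]
    have em : z - (y + z) / 2 = (z - y) / 2 := by ring
    have em' : (y + z) / 2 - y = (z - y) / 2 := by ring
    congr 1
    · have h := intervalIntegral.integral_comp_sub_left (a := y) (b := (y + z) / 2) c z
      rw [h, em]
      exact (Cdiff hc ⟨by linarith, by linarith⟩ ⟨by linarith, by linarith⟩).symm
    · have h := intervalIntegral.integral_comp_sub_right (a := y) (b := (y + z) / 2) c y
      simp only [sub_self] at h
      rw [h, em']; rfl
  rw [hsplit, p1, p2, p3]
  ring

lemma U_reflect (c : ℝ → ℝ) (y z : ℝ) : U c y z = U c (1 - y) (1 - z) := by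
  unfold U w
  have h := intervalIntegral.integral_comp_sub_left (a := (0:ℝ)) (b := 1)
    (fun b => max (c |1 - y - b|) (c |1 - z - b|) - c |1 - y - b|) 1
  simp only [sub_self, sub_zero] at h
  rw [← h]
  apply intervalIntegral.integral_congr
  intro b _
  simp only
  rw [show (1:ℝ) - y - (1 - b) = -(y - b) by ring,
    show (1:ℝ) - z - (1 - b) = -(z - b) by ring, abs_neg, abs_neg]

lemma U_lt_max (hc : ContinuousOn c (Icc 0 1)) (hmono : StrictMonoOn c (Icc 0 1))
    {y z : ℝ} (h0 : 0 ≤ y) (hyz : y ≤ z) (h1 : z ≤ 1) (hne : y ≠ z / 3) :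
    U c y z < U c (z / 3) z := by
  have hz0 : 0 ≤ z := h0.trans hyz
  have hmono' := hmono.monotoneOn
  rw [U_formula_s18 hc hmono' h0 hyz h1,
    U_formula_s18 hc hmono' (by linarith) (by linarith) h1,
    show (z - z / 3) / 2 = z / 3 by ring]
  rcases hne.lt_or_gt with h | h
  · have s1 := CupperStrict hc hmono h0 h (by linarith)
    have s2 := Clower hc hmono (a := z / 3) (b := (z - y) / 2)
      (by linarith) (by linarith) (by linarith)
    nlinarith [s1, s2]
  · have s1 := CupperStrict hc hmono (a := (z - y) / 2) (b := z / 3)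
      (by linarith) (by linarith) (by linarith)
    have s2 := Clower hc hmono (a := z / 3) (b := y) (by linarith) h.le (hyz.trans h1)
    nlinarith [s1, s2]

lemma U_le_max (hc : ContinuousOn c (Icc 0 1)) (hmono : StrictMonoOn c (Icc 0 1))
    {y z : ℝ} (h0 : 0 ≤ y) (hyz : y ≤ z) (h1 : z ≤ 1) :
    U c y z ≤ U c (z / 3) z := by
  rcases eq_or_ne y (z / 3) with h | h
  · rw [h]
  · exact (U_lt_max hc hmono h0 hyz h1 h).le

lemma Uzz (hc : ContinuousOn c (Icc 0 1)) (hmono : StrictMonoOn c (Icc 0 1))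
    {x : ℝ} (hx : x ∈ Icc (0:ℝ) 1) : U c x x = 0 := by
  rw [U_formula_s18 hc hmono.monotoneOn hx.1 le_rfl hx.2,
    show (x - x) / 2 = (0:ℝ) by ring]
  have h : Cv c 0 = 0 := intervalIntegral.integral_same
  rw [h]; ring

lemma Gstep (hc : ContinuousOn c (Icc 0 1)) (hmono : StrictMonoOn c (Icc 0 1)) :
    U c (1/12 : ℝ) (1/4) ≤ U c (1/4) (3/4) := by
  have hmono' := hmono.monotoneOn
  rw [U_formula_s18 hc hmono' (by norm_num) (by norm_num) (by norm_num),
    U_formula_s18 hc hmono' (by norm_num) (by norm_num) (by norm_num),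
    show ((1:ℝ)/4 - 1/12) / 2 = 1/12 by norm_num,
    show ((3:ℝ)/4 - 1/4) / 2 = 1/4 by norm_num]
  have l1 := Clower hc hmono (a := (1:ℝ)/4) (b := 3/4) (by norm_num) (by norm_num) (by norm_num)
  have l2 := Cupper hc hmono (a := (1:ℝ)/12) (b := 1/4) (by norm_num) (by norm_num) (by norm_num)
  nlinarith [l1, l2]

lemma equil_struct (hc : ContinuousOn c (Icc 0 1)) (hmono : StrictMonoOn c (Icc 0 1))
    {a b : ℝ} (ha : a ∈ Icc (0:ℝ) 1) (hb : b ∈ Icc (0:ℝ) 1) (hab : a < b)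
    (hmax1 : ∀ y ∈ Icc (0:ℝ) 1, U c y b ≤ U c a b)
    (hmax2 : ∀ y ∈ Icc (0:ℝ) 1, U c y a ≤ U c b a) :
    a = 1/4 ∧ b = 3/4 := by
  have hA : a = b / 3 := by
    by_contra hne
    have h1 := U_lt_max hc hmono ha.1 hab.le hb.2 hne
    have h2 := hmax1 (b / 3) ⟨by linarith [hb.1], by linarith [hb.2]⟩
    linarith
  have hB : 1 - b = (1 - a) / 3 := by
    by_contra hne
    have h1 := U_lt_max hc hmono (y := 1 - b) (z := 1 - a)
      (by linarith [hb.2]) (by linarith) (by linarith [ha.1]) hne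
    have r1 : U c b a = U c (1 - b) (1 - a) := U_reflect c b a
    have r2 : U c ((1 - a) / 3) (1 - a) = U c ((2 + a) / 3) a := by
      have h2 := U_reflect c ((2 + a) / 3) a
      rw [show (1:ℝ) - (2 + a) / 3 = (1 - a) / 3 by ring] at h2
      exact h2.symm
    have h2 := hmax2 ((2 + a) / 3) ⟨by linarith [ha.1], by linarith [ha.2]⟩
    linarith
  constructor <;> linarith

theorem unique_polarized_equilibrium (c : ℝ → ℝ)
    (hc : ContinuousOn c (Icc 0 1)) (hmono : StrictMonoOn c (Icc 0 1))
    (x₁ x₂ : ℝ) :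
    (x₁ ∈ Icc (0:ℝ) 1 ∧ x₂ ∈ Icc (0:ℝ) 1 ∧
      (∀ y ∈ Icc (0:ℝ) 1, U c y x₂ ≤ U c x₁ x₂) ∧
      (∀ y ∈ Icc (0:ℝ) 1, U c y x₁ ≤ U c x₂ x₁)) ↔
    ({x₁, x₂} : Set ℝ) = {1/4, 3/4} := by
  constructor
  · rintro ⟨hx1, hx2, h3, h4⟩
    rcases lt_trichotomy x₁ x₂ with h | h | h
    · obtain ⟨e1, e2⟩ := equil_struct hc hmono hx1 hx2 h h3 h4
      rw [e1, e2]
    · exfalso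
      subst h
      rcases eq_or_lt_of_le hx1.1 with h0 | h0
      · have l1 := U_lt_max hc hmono (y := (1:ℝ)) (z := 1) zero_le_one le_rfl le_rfl
          (by norm_num)
        have l2 : U c 1 1 = 0 := Uzz hc hmono ⟨zero_le_one, le_rfl⟩
        have l3 : U c (2/3) x₁ = U c (1/3) 1 := by
          rw [U_reflect c (2/3) x₁, ← h0]
          norm_num
        have l4 := h3 (2/3) (by constructor <;> norm_num)
        have l5 : U c x₁ x₁ = 0 := Uzz hc hmono hx1
        have e : (1:ℝ)/3 = 1/3 := rfl
        rw [show (1:ℝ)/3 = 1/3 from rfl] at l1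
        linarith [l1, l2, l3, l4, l5]
      · have hne : x₁ ≠ x₁ / 3 := by intro hh; linarith
        have l1 := U_lt_max hc hmono hx1.1 le_rfl hx1.2 hne
        have l2 := h3 (x₁ / 3) ⟨by linarith [hx1.1], by linarith [hx1.2]⟩
        have l5 : U c x₁ x₁ = 0 := Uzz hc hmono hx1
        linarith
    · obtain ⟨e1, e2⟩ := equil_struct hc hmono hx2 hx1 h h4 h3
      rw [e1, e2]
      exact Set.pair_comm _ _
  · intro h
    have E1 : ∀ y ∈ Icc (0:ℝ) 1, U c y (3/4) ≤ U c (1/4) (3/4) := by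
      intro y hy
      have key := Gstep hc hmono
      rcases le_or_gt y (3/4) with hcase | hcase
      · have h' := U_le_max hc hmono hy.1 hcase (by norm_num)
        rw [show (3:ℝ)/4 / 3 = 1/4 by norm_num] at h'
        exact h'
      · have r1 : U c y (3/4) = U c (1 - y) (1/4) := by
          rw [U_reflect c y (3/4), show (1:ℝ) - 3/4 = 1/4 by norm_num]
        have r2 := U_le_max hc hmono (y := 1 - y) (z := 1/4)
          (by linarith [hy.2]) (by linarith) (by norm_num)
        rw [show (1:ℝ)/4 / 3 = 1/12 by norm_num] at r2
        linarith
    have E2 : ∀ y ∈ Icc (0:ℝ) 1, U c y (1/4) ≤ U c (3/4) (1/4) := by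
      intro y hy
      have key := Gstep hc hmono
      have swap : U c (3/4 : ℝ) (1/4) = U c (1/4) (3/4) := by
        rw [U_reflect c (3/4) (1/4), show (1:ℝ) - 3/4 = 1/4 by norm_num,
          show (1:ℝ) - 1/4 = 3/4 by norm_num]
      rcases le_or_gt y (1/4) with hcase | hcase
      · have h' := U_le_max hc hmono hy.1 hcase (by norm_num)
        rw [show (1:ℝ)/4 / 3 = 1/12 by norm_num] at h'
        linarith
      · have r1 : U c y (1/4) = U c (1 - y) (3/4) := by
          rw [U_reflect c y (1/4), show (1:ℝ) - 1/4 = 3/4 by norm_num]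
        have r2 := U_le_max hc hmono (y := 1 - y) (z := 3/4)
          (by linarith [hy.2]) (by linarith) (by norm_num)
        rw [show (3:ℝ)/4 / 3 = 1/4 by norm_num] at r2
        linarith
    have hmem1 : x₁ = 1/4 ∨ x₁ = 3/4 := by
      have hx : x₁ ∈ ({1/4, 3/4} : Set ℝ) := h ▸ Set.mem_insert x₁ {x₂}
      simpa using hx
    have hmem2 : x₂ = 1/4 ∨ x₂ = 3/4 := by
      have hx : x₂ ∈ ({1/4, 3/4} : Set ℝ) := h ▸ Set.mem_insert_of_mem x₁ rfl
      simpa using hx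
    rcases hmem1 with e1 | e1 <;> rcases hmem2 with e2 | e2
    · exfalso
      have hx : (3/4 : ℝ) ∈ ({x₁, x₂} : Set ℝ) := h.symm ▸ Set.mem_insert_of_mem _ rfl
      rw [e1, e2] at hx
      norm_num at hx
    · refine ⟨by rw [e1]; exact ⟨by norm_num, by norm_num⟩,
        by rw [e2]; exact ⟨by norm_num, by norm_num⟩, ?_, ?_⟩
      · rw [e1, e2]; exact E1
      · rw [e1, e2]; exact E2
    · refine ⟨by rw [e1]; exact ⟨by norm_num, by norm_num⟩,
        by rw [e2]; exact ⟨by norm_num, by norm_num⟩, ?_, ?_⟩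
      · rw [e1, e2]; exact E2
      · rw [e1, e2]; exact E1
    · exfalso
      have hx : (1/4 : ℝ) ∈ ({x₁, x₂} : Set ℝ) := h.symm ▸ Set.mem_insert _ _
      rw [e1, e2] at hx
      norm_num at hx
end
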